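/- Let A be the spider graph adjacency matrix as above and let α be a root of U_L(x/2) (so α = 2cos((k+1)π/(L+1)) for some 0 ≤ k < L). Then α is an eigenvalue of A with geometric multiplicity at least K − 2, and explicit eigenvectors are given by v = (P_0(α)h, ..., P_{L-1}(α)h)^T where P_n(x) = U_n(x/2)I_K − U_{n-1}(x/2)B and h ranges over the null space of B, which has dimension K − 2 (for K ≥ 2). -/
import Mathlib


open Polynomial

lemma sum_fin_ite {L : ℕ} (m : ℕ) (g : ℕ → ℂ) :
    (∑ j : Fin L, if (j : ℕ) = m then g (j : ℕ) else 0) =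
      if m < L then g m else 0 := by
  rw [Fin.sum_univ_eq_sum_range (fun j => if j = m then g j else 0)]
  rw [Finset.sum_ite_eq' (Finset.range L) m g]
  simp [Finset.mem_range]

/-- any root `α` of `U_L(x/2)` is an eigenvalue of the spider graph adjacency
matrix with geometric multiplicity at least `K − 2`; explicit eigenvectors are
`(P₀(α)h, …, P_{L-1}(α)h)` for `h` in the null space of `B`, which has dimension `K − 2`. -/
theorem spider_eigenvalues_from_chebyshev_roots
    (K L : ℕ) (hK : 2 ≤ K) (hL : 0 < L)
    (B : Matrix (Fin K) (Fin K) ℂ)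
    (hB : ∀ i j : Fin K,
      B i j = if ((i : ℕ) = 0 ∧ (j : ℕ) ≠ 0) ∨ ((j : ℕ) = 0 ∧ (i : ℕ) ≠ 0) then 1 else 0)
    (A : Matrix (Fin L × Fin K) (Fin L × Fin K) ℂ)
    (hA : ∀ (i j : Fin L) (k l : Fin K),
      A (i, k) (j, l) =
        if (i : ℕ) = (j : ℕ) then (if (i : ℕ) = 0 then B k l else 0)
        else if (j : ℕ) = (i : ℕ) + 1 ∨ (i : ℕ) = (j : ℕ) + 1 then
          (1 : Matrix (Fin K) (Fin K) ℂ) k l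
        else 0)
    (P : ℕ → ℂ → Matrix (Fin K) (Fin K) ℂ)
    (hP : ∀ (n : ℕ) (x : ℂ),
      P n x = ((Polynomial.Chebyshev.U ℂ (n : ℤ)).eval (x / 2)) •
          (1 : Matrix (Fin K) (Fin K) ℂ)
        - ((Polynomial.Chebyshev.U ℂ ((n : ℤ) - 1)).eval (x / 2)) • B)
    (α : ℂ) (hα : (Polynomial.Chebyshev.U ℂ (L : ℤ)).eval (α / 2) = 0) :
    (∀ h : Fin K → ℂ, B.mulVec h = 0 →
      A.mulVec (fun p : Fin L × Fin K => (P (p.1 : ℕ) α).mulVec h p.2) =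
        α • (fun p : Fin L × Fin K => (P (p.1 : ℕ) α).mulVec h p.2)) ∧
    Module.finrank ℂ (LinearMap.ker (Matrix.mulVecLin B)) = K - 2 ∧
    K - 2 ≤ Module.finrank ℂ (LinearMap.ker (Matrix.mulVecLin (A - α • 1))) := by
  set u : ℤ → ℂ := fun n => (Polynomial.Chebyshev.U ℂ n).eval (α / 2) with hudef
  have hrec : ∀ n : ℤ, u (n + 1) = α * u n - u (n - 1) := by
    intro n
    have h := Polynomial.Chebyshev.U_add_two ℂ (n - 1)
    have h2 : (n - 1 + 2 : ℤ) = n + 1 := by ring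
    have h3 : (n - 1 + 1 : ℤ) = n := by ring
    rw [h2, h3] at h
    simp only [hudef]
    rw [h]
    simp only [eval_sub, eval_mul, eval_ofNat, eval_X]
    ring
  have hu0 : u 0 = 1 := by simp [hudef]
  have hum1 : u (-1) = 0 := by simp [hudef, Polynomial.Chebyshev.U_neg_one]
  have huL : u L = 0 := hα
  -- eigenvector formula
  have hvform : ∀ h : Fin K → ℂ, B.mulVec h = 0 →
      (fun p : Fin L × Fin K => (P (p.1 : ℕ) α).mulVec h p.2) =
        fun p : Fin L × Fin K => u ((p.1 : ℕ) : ℤ) * h p.2 := by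
    intro h hBh
    funext p
    rw [hP]
    simp [Matrix.sub_mulVec, Matrix.smul_mulVec, hBh, Matrix.one_mulVec, hudef]
  -- main eigen equation
  have main : ∀ h : Fin K → ℂ, B.mulVec h = 0 →
      A.mulVec (fun p : Fin L × Fin K => (P (p.1 : ℕ) α).mulVec h p.2) =
        α • (fun p : Fin L × Fin K => (P (p.1 : ℕ) α).mulVec h p.2) := by
    intro h hBh
    rw [hvform h hBh]
    funext p
    obtain ⟨i, k⟩ := p
    have hBhk : ∀ k' : Fin K, (∑ l, B k' l * h l) = 0 := by
      intro k'
      have := congrFun hBh k'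
      simpa [Matrix.mulVec, dotProduct] using this
    show (∑ q : Fin L × Fin K, A (i, k) q * (u (q.1 : ℕ) * h q.2)) = α * (u (i : ℕ) * h k)
    rw [Fintype.sum_prod_type]
    have inner : ∀ j : Fin L,
        (∑ l : Fin K, A (i, k) (j, l) * (u (j : ℕ) * h l)) =
          if (j : ℕ) = (i : ℕ) + 1 ∨ (i : ℕ) = (j : ℕ) + 1 then u (j : ℕ) * h k else 0 := by
      intro j
      by_cases hij : (i : ℕ) = (j : ℕ)
      · have hor : ¬((j : ℕ) = (i : ℕ) + 1 ∨ (i : ℕ) = (j : ℕ) + 1) := by omega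
        rw [if_neg hor]
        by_cases hi0 : (i : ℕ) = 0
        · have : ∀ l : Fin K, A (i, k) (j, l) * (u (j : ℕ) * h l) =
              u (j : ℕ) * (B k l * h l) := by
            intro l
            rw [hA, if_pos hij, if_pos hi0]
            ring
          rw [Finset.sum_congr rfl fun l _ => this l, ← Finset.mul_sum, hBhk, mul_zero]
        · have : ∀ l : Fin K, A (i, k) (j, l) * (u (j : ℕ) * h l) = 0 := by
            intro l
            rw [hA, if_pos hij, if_neg hi0, zero_mul]
          rw [Finset.sum_congr rfl fun l _ => this l, Finset.sum_const_zero]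
      · by_cases hor : (j : ℕ) = (i : ℕ) + 1 ∨ (i : ℕ) = (j : ℕ) + 1
        · rw [if_pos hor]
          have : ∀ l : Fin K, A (i, k) (j, l) * (u (j : ℕ) * h l) =
              if k = l then u (j : ℕ) * h l else 0 := by
            intro l
            rw [hA, if_neg hij, if_pos hor, Matrix.one_apply]
            split_ifs <;> simp
          rw [Finset.sum_congr rfl fun l _ => this l]
          rw [Finset.sum_ite_eq (Finset.univ : Finset (Fin K)) k (fun l => u (j : ℕ) * h l)]
          simp
        · rw [if_neg hor]
          have : ∀ l : Fin K, A (i, k) (j, l) * (u (j : ℕ) * h l) = 0 := by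
            intro l
            rw [hA, if_neg hij, if_neg hor, zero_mul]
          rw [Finset.sum_congr rfl fun l _ => this l, Finset.sum_const_zero]
    rw [Finset.sum_congr rfl fun j _ => inner j]
    have split : ∀ j : Fin L,
        (if (j : ℕ) = (i : ℕ) + 1 ∨ (i : ℕ) = (j : ℕ) + 1 then u (j : ℕ) * h k else 0) =
          (if (j : ℕ) = (i : ℕ) + 1 then u (j : ℕ) * h k else 0) +
          (if (i : ℕ) = (j : ℕ) + 1 then u (j : ℕ) * h k else 0) := by
      intro j
      by_cases h1 : (j : ℕ) = (i : ℕ) + 1 <;> by_cases h2 : (i : ℕ) = (j : ℕ) + 1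
      · exact absurd h1 (by omega)
      · rw [if_pos (Or.inl h1), if_pos h1, if_neg h2, add_zero]
      · rw [if_pos (Or.inr h2), if_neg h1, if_pos h2, zero_add]
      · rw [if_neg (by tauto), if_neg h1, if_neg h2, add_zero]
    rw [Finset.sum_congr rfl fun j _ => split j, Finset.sum_add_distrib]
    rw [sum_fin_ite ((i : ℕ) + 1) (fun n => u n * h k)]
    have hiL : (i : ℕ) < L := i.isLt
    rcases Nat.eq_zero_or_pos (i : ℕ) with hi0 | hipos
    · -- i = 0
      have hzero : (∑ j : Fin L, if (i : ℕ) = (j : ℕ) + 1 then u (j : ℕ) * h k else 0) = 0 := by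
        apply Finset.sum_eq_zero
        intro j _
        rw [if_neg (by omega)]
      rw [hzero, add_zero, hi0]
      have hu1 : u 1 = α := by
        have h1 := hrec 0
        norm_num at h1
        rw [hu0, hum1] at h1
        rw [h1]; ring
      by_cases hL1 : 0 + 1 < L
      · rw [if_pos hL1]
        push_cast
        rw [hu1, hu0]
        ring
      · rw [if_neg hL1]
        have hLeq : L = 1 := by omega
        have hα0 : α = 0 := by
          rw [← hu1, ← huL, hLeq]
          norm_num
        rw [hα0, zero_mul]
    · -- i ≥ 1
      obtain ⟨m, hm⟩ : ∃ m, (i : ℕ) = m + 1 := ⟨(i : ℕ) - 1, by omega⟩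
      have hsecond : (∑ j : Fin L, if (i : ℕ) = (j : ℕ) + 1 then u (j : ℕ) * h k else 0) =
          (∑ j : Fin L, if (j : ℕ) = m then u (j : ℕ) * h k else 0) := by
        apply Finset.sum_congr rfl
        intro j _
        congr 1
        simp only [eq_iff_iff]
        omega
      rw [hsecond, sum_fin_ite m (fun n => u n * h k), if_pos (by omega : m < L), hm]
      have hrecm := hrec (m + 1)
      have hcast1 : ((m + 1 + 1 : ℕ) : ℤ) = (m : ℤ) + 1 + 1 := by push_cast; ring
      have hcast2 : ((m + 1 : ℕ) : ℤ) = (m : ℤ) + 1 := by push_cast; ring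
      have hcast3 : ((m : ℕ) : ℤ) = (m : ℤ) := rfl
      by_cases hm2 : m + 1 + 1 < L
      · rw [if_pos hm2, hcast1, hcast2]
        rw [show ((m:ℤ) + 1 + 1) = (m + 1) + 1 by ring, hrecm]
        rw [show ((m:ℤ) + 1 - 1) = (m:ℤ) by ring]
        ring
      · rw [if_neg hm2]
        have hLeq : L = m + 2 := by omega
        have hUL : u ((m : ℤ) + 1 + 1) = 0 := by
          rw [← huL, hLeq]; push_cast; ring_nf
        rw [show ((m:ℤ) + 1 + 1) = (m + 1) + 1 by ring, hrecm,
          show ((m:ℤ) + 1 - 1) = (m:ℤ) by ring] at hUL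
        rw [hcast2]
        have : u (m : ℤ) = α * u ((m : ℤ) + 1) := by linear_combination -hUL
        rw [zero_add, this]
        ring
  have hrankB : Module.finrank ℂ (LinearMap.ker (Matrix.mulVecLin B)) = K - 2 := by
      set z : Fin K := ⟨0, by omega⟩ with hz
      set o : Fin K := ⟨1, by omega⟩ with ho
      -- kernel characterization
      have hentry : ∀ (h : Fin K → ℂ) (i : Fin K), B.mulVec h i =
          if (i : ℕ) = 0 then (∑ j, h j) - h z else h z := by
        intro h i
        by_cases hi : (i : ℕ) = 0
        · rw [if_pos hi]
          have e : ∀ j : Fin K, B i j * h j = h j - (if j = z then h j else 0) := by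
            intro j
            rw [hB]
            by_cases hj : (j : ℕ) = 0
            · have hjz : j = z := Fin.ext (by simpa [hz] using hj)
              rw [if_neg (by simp [hi, hj]), if_pos hjz]; simp
            · have hjz : j ≠ z := fun e => hj (by rw [e])
              rw [if_pos (Or.inl ⟨hi, hj⟩), if_neg hjz, one_mul, sub_zero]
          show (∑ j, B i j * h j) = _
          rw [Finset.sum_congr rfl fun j _ => e j, Finset.sum_sub_distrib,
            Finset.sum_ite_eq' Finset.univ z h]
          simp
        · rw [if_neg hi]
          have e : ∀ j : Fin K, B i j * h j = if j = z then h j else 0 := by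
            intro j
            rw [hB]
            by_cases hj : (j : ℕ) = 0
            · have hjz : j = z := Fin.ext (by simpa [hz] using hj)
              rw [if_pos (Or.inr ⟨hj, hi⟩), if_pos hjz]; simp
            · have hjz : j ≠ z := fun e => hj (by rw [e])
              rw [if_neg (by tauto), if_neg hjz, zero_mul]
          show (∑ j, B i j * h j) = _
          rw [Finset.sum_congr rfl fun j _ => e j, Finset.sum_ite_eq' Finset.univ z h]
          simp
      have hker : ∀ h : Fin K → ℂ, B.mulVec h = 0 ↔ (h z = 0 ∧ (∑ j, h j) = 0) := by
        intro h
        constructor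
        · intro he
          have h1 := congrFun he o
          have h0 := congrFun he z
          rw [hentry] at h1 h0
          rw [if_neg (by simp [ho])] at h1
          rw [if_pos (by simp [hz])] at h0
          simp only [Pi.zero_apply] at h1 h0
          refine ⟨h1, ?_⟩
          rw [h1, sub_zero] at h0
          exact h0
        · rintro ⟨e1, e2⟩
          funext i
          rw [hentry, e1, e2]
          simp
      -- the linear functional pair
      let f : (Fin K → ℂ) →ₗ[ℂ] ℂ × ℂ :=
        { toFun := fun h => (h z, ∑ j, h j)
          map_add' := by intro a b; simp [Finset.sum_add_distrib]
          map_smul' := by intro c a; simp [Finset.mul_sum] }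
      have hkerf : LinearMap.ker f = LinearMap.ker B.mulVecLin := by
        ext h
        simp only [LinearMap.mem_ker, Matrix.mulVecLin_apply, hker h, f, LinearMap.coe_mk,
          AddHom.coe_mk, Prod.mk_eq_zero]
      have hsurj : Function.Surjective f := by
        rintro ⟨a, b⟩
        refine ⟨Pi.single z a + Pi.single o (b - a), ?_⟩
        have hzo : z ≠ o := by simp [hz, ho, Fin.ext_iff]
        simp only [f, LinearMap.coe_mk, AddHom.coe_mk, Pi.add_apply, Prod.mk.injEq]
        constructor
        · rw [Pi.single_eq_same, Pi.single_eq_of_ne hzo]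
          ring
        · rw [Finset.sum_add_distrib, Finset.sum_pi_single', Finset.sum_pi_single']
          simp
      have h1 := LinearMap.finrank_range_add_finrank_ker f
      rw [LinearMap.range_eq_top.mpr hsurj, hkerf] at h1
      have h2 : Module.finrank ℂ (⊤ : Submodule ℂ (ℂ × ℂ)) = 2 := by
        simp [finrank_top]
      have h3 : Module.finrank ℂ (Fin K → ℂ) = K := by simp
      rw [h2, h3] at h1
      omega
  refine ⟨main, hrankB, ?_⟩
  -- part 3
  let g : (Fin K → ℂ) →ₗ[ℂ] (Fin L × Fin K → ℂ) :=
    { toFun := fun h => fun p => u ((p.1 : ℕ) : ℤ) * h p.2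
      map_add' := by intro a b; funext p; simp [mul_add]
      map_smul' := by intro c a; funext p; simp; ring }
  have hginj : Function.Injective g := by
    intro a b hab
    funext k
    have h0 := congrFun hab (⟨0, hL⟩, k)
    simpa [g, hu0] using h0
  have hmaple : Submodule.map g (LinearMap.ker B.mulVecLin) ≤
      LinearMap.ker (Matrix.mulVecLin (A - α • 1)) := by
    rintro v ⟨h, hh, rfl⟩
    have hBh : B.mulVec h = 0 := hh
    have hm := main h hBh
    rw [hvform h hBh] at hm
    rw [LinearMap.mem_ker, Matrix.mulVecLin_apply, Matrix.sub_mulVec,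
      Matrix.smul_mulVec, Matrix.one_mulVec]
    have hgh : (g h : Fin L × Fin K → ℂ) = fun p => u ((p.1 : ℕ) : ℤ) * h p.2 := rfl
    rw [hgh, hm, sub_self]
  have e1 := (Submodule.equivMapOfInjective g hginj (LinearMap.ker B.mulVecLin)).finrank_eq
  have e2 := Submodule.finrank_mono hmaple
  rw [← hrankB, e1]
  exact e2
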